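/- arXiv:1105.0648 — 3 statements merged into one kernel-verified Lean document; each statement's English description precedes it below -/
import Mathlib

section
/- With the Ornstein–Weiss tiling data {(Λᵢ, Aᵢ)}ᵢ∈I satisfying: (1) each Λᵢ ⊆ G finite with |{g ∈ Λᵢ : ∃f ∈ F, fg ∉ Λᵢ}| < δ|Λᵢ|, (2) the translates a(λ)Aᵢ over all i ∈ I, λ ∈ Λᵢ are pairwise disjoint, and (3) μ(⋃ᵢ ⋃_{λ∈Λᵢ} a(λ)Aᵢ) ≥ 1 − η, define J : X → G by J(x) = λ if x ∈ a(λ)Aᵢ for some i and λ ∈ Λᵢ (arbitrary otherwise). Then μ({x : J(f·x) = f·J(x) for all f ∈ F}) ≥ 1 − η − δ, provided e ∈ F. -/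
open MeasureTheory

open MeasureTheory

/-- The itinerary map of an observable `φ` over a finite window `F`. -/
def obsMap {G X : Type*} (act : G → X → X) (φ : X → ℕ) (F : Finset G) (x : X) : F → ℕ :=
  fun f => φ (act f x)

/-- Weak containment of p.m.p. actions (Kechris): the first action is weakly contained
in the second. -/
def WeaklyContained {G X Y : Type*} [MeasurableSpace X] [MeasurableSpace Y]
    (actA : G → X → X) (μ : Measure X) (actB : G → Y → Y) (ν : Measure Y) : Prop :=
  ∀ ε : ℝ, 0 < ε → ∀ (F : Finset G) (φ : X → ℕ), Measurable φ →
    ∃ ψ : Y → ℕ, Measurable ψ ∧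
      ∑' u : F → ℕ, |(μ.map (obsMap actA φ F) {u}).toReal -
        (ν.map (obsMap actB ψ F) {u}).toReal| ≤ ε

/-- `act` is a probability-measure-preserving action of the group `G`. -/
def IsPMPAction {G X : Type*} [Group G] [MeasurableSpace X]
    (act : G → X → X) (μ : Measure X) : Prop :=
  (∀ x, act 1 x = x) ∧ (∀ g h x, act (g * h) x = act g (act h x)) ∧
    ∀ g, MeasurePreserving (act g) μ μ

/-- The action `act` is (essentially) free. -/
def IsFreeAction {G X : Type*} [Group G] [MeasurableSpace X]
    (act : G → X → X) (μ : Measure X) : Prop :=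
  ∀ g : G, g ≠ 1 → μ {x | act g x = x} = 0

open Classical in
/-- The deduction of the equivariant map from Ornstein–Weiss tiling data: given an
`(F, δ)`-invariant tiling `{(Λᵢ, Aᵢ)}` whose translates cover all but `η` of the space,
the map `J` sending `a(λ)Aᵢ` to `λ` is `F`-equivariant off a set of measure `η + δ`. -/
theorem tiling_equivariant_map {G : Type*} [Group G] [Countable G]
    {X : Type*} [MeasurableSpace X] (μ : Measure X) [IsProbabilityMeasure μ]
    (a : G → X → X) (ha : IsPMPAction a μ)
    (F : Finset G) (hF : (1 : G) ∈ F) (δ η : ℝ) (hδ : 0 < δ) (hη : 0 < η)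
    {I : Type*} [Fintype I] (Λ : I → Finset G) (A : I → Set X)
    (hΛ : ∀ i, (Λ i).Nonempty) (hA : ∀ i, MeasurableSet (A i))
    (hbd : ∀ i, (((Λ i).filter fun g => ∃ f ∈ F, f * g ∉ Λ i).card : ℝ) < δ * (Λ i).card)
    (hdisj : ∀ i j, ∀ l ∈ Λ i, ∀ l' ∈ Λ j, (i ≠ j ∨ l ≠ l') →
      Disjoint (a l '' A i) (a l' '' A j))
    (hcover : ENNReal.ofReal (1 - η) ≤ μ (⋃ i, ⋃ l ∈ Λ i, a l '' A i))
    (J : X → G) (hJ : ∀ i, ∀ l ∈ Λ i, ∀ x ∈ A i, J (a l x) = l) :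
    ENNReal.ofReal (1 - η - δ) ≤ μ {x | ∀ f ∈ F, J (a f x) = f * J x} := by
  classical
  obtain ⟨h1, hmul, hmp⟩ := ha
  have himg : ∀ (l : G) (i : I), a l '' A i = a l⁻¹ ⁻¹' A i := by
    intro l i
    ext x
    constructor
    · rintro ⟨y, hy, rfl⟩
      have hyy : a l⁻¹ (a l y) = y := by rw [← hmul]; simp [h1]
      simpa [Set.mem_preimage, hyy]
    · intro hx
      exact ⟨a l⁻¹ x, hx, by rw [← hmul]; simp [h1]⟩
  have hmeas : ∀ (l : G) (i : I), MeasurableSet (a l '' A i) := by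
    intro l i; rw [himg]; exact (hmp l⁻¹).measurable (hA i)
  have hmeasval : ∀ (l : G) (i : I), μ (a l '' A i) = μ (A i) := by
    intro l i; rw [himg]
    exact (hmp l⁻¹).measure_preimage (hA i).nullMeasurableSet
  have key : ∀ (Λ'' : I → Finset G), (∀ i, Λ'' i ⊆ Λ i) →
      μ (⋃ i, ⋃ l ∈ Λ'' i, a l '' A i) = ∑ i, ((Λ'' i).card : ENNReal) * μ (A i) := by
    intro Λ'' hsub
    have hset : (⋃ i, ⋃ l ∈ Λ'' i, a l '' A i) =
        ⋃ p ∈ (Finset.univ.sigma Λ'' : Finset ((_ : I) × G)), a p.2 '' A p.1 := by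
      ext x; simp [Finset.mem_sigma, Sigma.exists]
    rw [hset, measure_biUnion_finset]
    · rw [Finset.sum_sigma]
      apply Finset.sum_congr rfl
      intro i _
      rw [Finset.sum_congr rfl fun l _ => hmeasval l i, Finset.sum_const, nsmul_eq_mul]
    · intro p hp q hq hpq
      simp only [Finset.coe_sigma, Finset.mem_coe, Finset.mem_sigma] at hp hq
      apply hdisj p.1 q.1 p.2 (hsub _ hp.2) q.2 (hsub _ hq.2)
      by_contra h
      push_neg at h
      exact hpq (Sigma.ext h.1 (heq_of_eq h.2))
    · intro p _; exact hmeas p.2 p.1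
  set Λg : I → Finset G := fun i => (Λ i).filter fun g => ∀ f ∈ F, f * g ∈ Λ i with hΛg
  set Bd : I → Finset G := fun i => (Λ i).filter fun g => ∃ f ∈ F, f * g ∉ Λ i with hBd
  set S : Set X := ⋃ i, ⋃ l ∈ Λg i, a l '' A i with hS
  set Bu : Set X := ⋃ i, ⋃ l ∈ Bd i, a l '' A i with hBu
  have hFS : (⋃ i, ⋃ l ∈ Λ i, a l '' A i) = S ∪ Bu := by
    rw [hS, hBu]
    ext x
    simp only [Set.mem_iUnion, Set.mem_union]
    constructor
    · rintro ⟨i, l, hl, hx⟩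
      by_cases hc : ∀ f ∈ F, f * l ∈ Λ i
      · exact Or.inl ⟨i, l, Finset.mem_filter.2 ⟨hl, hc⟩, hx⟩
      · push_neg at hc
        exact Or.inr ⟨i, l, Finset.mem_filter.2 ⟨hl, hc⟩, hx⟩
    · rintro (⟨i, l, hl, hx⟩ | ⟨i, l, hl, hx⟩) <;>
        exact ⟨i, l, Finset.mem_filter.1 hl |>.1, hx⟩
  have hdisjSB : Disjoint S Bu := by
    rw [Set.disjoint_left]
    rintro x hxS hxB
    simp only [hS, Set.mem_iUnion] at hxS
    simp only [hBu, Set.mem_iUnion] at hxB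
    obtain ⟨i, l, hl, hx⟩ := hxS
    obtain ⟨j, l', hl', hx'⟩ := hxB
    have hne : i ≠ j ∨ l ≠ l' := by
      by_contra h
      push_neg at h
      obtain ⟨rfl, rfl⟩ := h
      simp only [hΛg, hBd, Finset.mem_filter] at hl hl'
      obtain ⟨f, hf, hfl⟩ := hl'.2
      exact hfl (hl.2 f hf)
    exact Set.disjoint_left.1
      (hdisj i j l (Finset.filter_subset _ _ hl) l' (Finset.filter_subset _ _ hl') hne) hx hx'
  have hBumeas : MeasurableSet Bu :=
    MeasurableSet.iUnion fun i => (Bd i).measurableSet_biUnion fun l _ => hmeas l i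
  have hT1 : ∑ i, ((Λ i).card : ENNReal) * μ (A i) ≤ 1 := by
    rw [← key Λ fun i => Finset.Subset.refl _]
    exact (measure_mono (Set.subset_univ _)).trans measure_univ.le
  have hBub : μ Bu ≤ ENNReal.ofReal δ := by
    rw [hBu, key Bd fun i => Finset.filter_subset _ _]
    calc ∑ i, ((Bd i).card : ENNReal) * μ (A i)
        ≤ ∑ i, ENNReal.ofReal δ * (((Λ i).card : ENNReal) * μ (A i)) := by
          apply Finset.sum_le_sum
          intro i _
          rw [← mul_assoc]
          apply mul_le_mul_left
          calc ((Bd i).card : ENNReal) = ENNReal.ofReal ((Bd i).card : ℝ) := by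
                rw [ENNReal.ofReal_natCast]
            _ ≤ ENNReal.ofReal (δ * (Λ i).card) := ENNReal.ofReal_le_ofReal (hbd i).le
            _ = ENNReal.ofReal δ * ((Λ i).card : ENNReal) := by
                rw [ENNReal.ofReal_mul hδ.le, ENNReal.ofReal_natCast]
      _ = ENNReal.ofReal δ * ∑ i, ((Λ i).card : ENNReal) * μ (A i) := by
          rw [Finset.mul_sum]
      _ ≤ ENNReal.ofReal δ * 1 := mul_le_mul_right hT1 _
      _ = ENNReal.ofReal δ := mul_one _
  have hsub : S ⊆ {x | ∀ f ∈ F, J (a f x) = f * J x} := by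
    intro x hx
    simp only [hS, Set.mem_iUnion] at hx
    obtain ⟨i, l, hl, y, hy, rfl⟩ := hx
    intro f hf
    simp only [hΛg, Finset.mem_filter] at hl
    have hJl : J (a l y) = l := hJ i l hl.1 y hy
    rw [← hmul, hJ i (f * l) (hl.2 f hf) y hy, hJl]
  calc ENNReal.ofReal (1 - η - δ) = ENNReal.ofReal (1 - η) - ENNReal.ofReal δ := by
        rw [← ENNReal.ofReal_sub _ hδ.le]
    _ ≤ μ (⋃ i, ⋃ l ∈ Λ i, a l '' A i) - μ Bu := tsub_le_tsub hcover hBub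
    _ = μ S := by
        rw [hFS, measure_union hdisjSB hBumeas,
          ENNReal.add_sub_cancel_right (measure_ne_top μ _)]
    _ ≤ μ {x | ∀ f ∈ F, J (a f x) = f * J x} := measure_mono hsub
end

section
/- Let H be a subgroup of a countable group G such that the action of G on G/H is amenable (equivalently, ℓ²(G/H) admits asymptotically invariant unit vectors for the quasi-regular representation). Then every orthogonal representation π of G is weakly contained in the sense of Zimmer in the induced representation Ind_H^G(π|H). -/
open Filter

/-!
Untwisting by the section, `f ↦ (x ↦ π(σ x)⁻¹ f x)`, identifies `Ind_H^G(π|H)` with `π ⊗ λ_{G/H}`: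
the vector `u ⊗ v` becomes `x ↦ u x • π(σ x)⁻¹ v`, and its matrix coefficients are those of `v`
under `π` times those of `u` under the quasi-regular representation. Asymptotically invariant
unit vectors `u` make the latter tend to `1`, so finitely many coefficients of `π` are
approximated simultaneously.
-/

/-- The coset cocycle `ρ(g, kH) = σ(g·kH)⁻¹ g σ(kH)` associated to a section `σ`. -/
def cosetCocycle {G : Type*} [Group G] (H : Subgroup G) (σ : G ⧸ H → G)
    (g : G) (k : G ⧸ H) : G :=
  (σ (g • k))⁻¹ * g * σ k

section Untwist

variable {G : Type*} [Group G] {H : Subgroup G}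

theorem cosetCocycle_inv_smul_mul_inv (σ : G ⧸ H → G) (g : G) (x : G ⧸ H) :
    cosetCocycle H σ g (g⁻¹ • x) * (σ (g⁻¹ • x))⁻¹ = (σ x)⁻¹ * g := by
  rw [cosetCocycle, smul_inv_smul]
  group

variable {𝕜 K : Type*} [RCLike 𝕜] [NormedAddCommGroup K] [InnerProductSpace 𝕜 K]

theorem inner_cosetCocycle_untwist (π : G →* (K ≃ₗᵢ[𝕜] K)) (σ : G ⧸ H → G) (g : G)
    (x : G ⧸ H) (a b : K) :
    inner 𝕜 (π (cosetCocycle H σ g (g⁻¹ • x)) (π (σ (g⁻¹ • x))⁻¹ a)) (π (σ x)⁻¹ b) =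
      inner 𝕜 (π g a) b := by
  rw [← LinearIsometryEquiv.trans_apply, ← LinearIsometryEquiv.mul_def, ← map_mul,
    cosetCocycle_inv_smul_mul_inv, map_mul, LinearIsometryEquiv.mul_def,
    LinearIsometryEquiv.trans_apply, LinearIsometryEquiv.inner_map_map]

end Untwist

section InducedTensor

variable {G : Type*} [Group G] {H : Subgroup G} {K : Type*} [NormedAddCommGroup K]
  [InnerProductSpace ℝ K]

/-- The vector `u ⊗ v` of `π ⊗ λ_{G/H}`, seen in the space of `Ind_H^G(π|H)`. -/
def inducedTensor (π : G →* (K ≃ₗᵢ[ℝ] K)) (σ : G ⧸ H → G) (u : G ⧸ H → ℝ) (v : K) :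
    G ⧸ H → K :=
  fun x => u x • π (σ x)⁻¹ v

theorem tsum_inner_inducedTensor (π : G →* (K ≃ₗᵢ[ℝ] K)) (σ : G ⧸ H → G) (u : G ⧸ H → ℝ)
    (g : G) (a b : K) :
    ∑' x : G ⧸ H, inner ℝ (π (cosetCocycle H σ g (g⁻¹ • x)) (inducedTensor π σ u a (g⁻¹ • x)))
        (inducedTensor π σ u b x) =
      (∑' x : G ⧸ H, u (g⁻¹ • x) * u x) * inner ℝ (π g a) b := by
  rw [← tsum_mul_right]
  refine tsum_congr fun x => ?_
  rw [inducedTensor, inducedTensor, map_smul, real_inner_smul_left, real_inner_smul_right,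
    inner_cosetCocycle_untwist, mul_assoc]

end InducedTensor

theorem eventually_abs_sub_mul_lt {ι : Type*} {l : Filter ι} {S : ι → ℝ}
    (hS : Tendsto S l (nhds 1)) (c : ℝ) {ε : ℝ} (hε : 0 < ε) :
    ∀ᶠ n in l, |c - S n * c| < ε := by
  have hlim : Tendsto (fun n => c - S n * c) l (nhds 0) := by
    simpa using (tendsto_const_nhds (x := c)).sub (hS.mul_const c)
  simpa [Real.dist_eq] using Metric.tendsto_nhds.mp hlim ε hε

theorem zimmer_weak_containment_induced_general {G : Type*} [Group G]
    (H : Subgroup G) {K : Type*} [NormedAddCommGroup K] [InnerProductSpace ℝ K]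
    (π : G →* (K ≃ₗᵢ[ℝ] K))
    (σ : G ⧸ H → G)
    (hamen : ∃ u : ℕ → (G ⧸ H) → ℝ, (∀ n, ∑' x : G ⧸ H, (u n x) ^ 2 = 1) ∧
      ∀ g : G, Tendsto (fun n => ∑' x : G ⧸ H, u n (g⁻¹ • x) * u n x) atTop (nhds 1))
    (k : ℕ) (v : Fin k → K) (ε : ℝ) (hε : 0 < ε) (F : Finset G) :
    ∃ w : Fin k → (G ⧸ H) → K, ∀ g ∈ F, ∀ i j : Fin k,
      |(inner ℝ (π g (v i)) (v j) : ℝ) -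
        ∑' x : G ⧸ H,
          (inner ℝ (π (cosetCocycle H σ g (g⁻¹ • x)) (w i (g⁻¹ • x))) (w j x) : ℝ)| < ε := by
  obtain ⟨u, -, hu⟩ := hamen
  have hclose : ∀ᶠ n in atTop, ∀ g ∈ F, ∀ i j : Fin k,
      |inner ℝ (π g (v i)) (v j) -
        (∑' x : G ⧸ H, u n (g⁻¹ • x) * u n x) * inner ℝ (π g (v i)) (v j)| < ε := by
    simp only [eventually_all_finset, eventually_all]
    exact fun g _ i j => eventually_abs_sub_mul_lt (hu g) _ hε
  obtain ⟨n, hn⟩ := hclose.exists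
  refine ⟨fun i => inducedTensor π σ (u n) (v i), fun g hg i j => ?_⟩
  rw [tsum_inner_inducedTensor]
  exact hn g hg i j

/-- Lemma 7.2: if the action of `G` on `G/H` is amenable (asymptotically invariant unit
vectors for the quasi-regular representation exist), then every orthogonal representation
`π` of `G` is weakly contained in the sense of Zimmer in `Ind_H^G(π|H)`, realized on
`K`-valued ℓ²-functions on `G/H` via the coset cocycle. -/
theorem zimmer_weak_containment_induced {G : Type*} [Group G] [Countable G]
    (H : Subgroup G) {K : Type*} [NormedAddCommGroup K] [InnerProductSpace ℝ K]
    (π : G →* (K ≃ₗᵢ[ℝ] K))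
    (σ : G ⧸ H → G) (hσ : ∀ q : G ⧸ H, ((σ q : G) : G ⧸ H) = q)
    (hσ1 : σ ((1 : G) : G ⧸ H) = 1)
    (hamen : ∃ u : ℕ → (G ⧸ H) → ℝ, (∀ n, ∑' x : G ⧸ H, (u n x) ^ 2 = 1) ∧
      ∀ g : G, Tendsto (fun n => ∑' x : G ⧸ H, u n (g⁻¹ • x) * u n x) atTop (nhds 1))
    (k : ℕ) (v : Fin k → K) (ε : ℝ) (hε : 0 < ε) (F : Finset G) :
    ∃ w : Fin k → (G ⧸ H) → K, ∀ g ∈ F, ∀ i j : Fin k,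
      |(inner ℝ (π g (v i)) (v j) : ℝ) -
        ∑' x : G ⧸ H,
          (inner ℝ (π (cosetCocycle H σ g (g⁻¹ • x)) (w i (g⁻¹ • x))) (w j x) : ℝ)| < ε :=
  zimmer_weak_containment_induced_general H π σ hamen k v ε hε F
end

section
/- Let G be a countable group and a, a', b, b' p.m.p. actions of G on standard probability spaces. If a is weakly contained in a' and b is weakly contained in b', then the product action a × b is weakly contained in a' × b'. -/
open MeasureTheory

open MeasureTheory

/-!
The law of the itinerary of an observable is compared in `ℓ¹`; this distance is contracted by
pushforwards and is subadditive under products of probability measures. Since the measurable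
rectangles generate the product σ-algebra, every observable `φ` of `X × Y` agrees, off a set of
small measure, with one of the form `h (φ₁ x) (φ₂ y)`; as `a` and `b` preserve measure, the same
is true of the itineraries over a finite window `F`, at the cost of a factor `#F`. The itinerary law
of `h (φ₁ x) (φ₂ y)` under `a × b` is the image of the product of the itinerary laws of `φ₁` and
`φ₂`, so observables `ψ₁`, `ψ₂` witnessing `a ≺ a'` and `b ≺ b'` give the observable
`h (ψ₁ x') (ψ₂ y')` of `a' × b'`.
-/

open MeasureTheory Set MeasurableSpace
open scoped symmDiff

noncomputable def l1Dist {α : Type*} [MeasurableSpace α] (p q : Measure α) : ℝ :=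
  ∑' u, |p.real {u} - q.real {u}|

lemma weaklyContained_iff_l1Dist {G X Y : Type*} [MeasurableSpace X] [MeasurableSpace Y]
    (actA : G → X → X) (μ : Measure X) (actB : G → Y → Y) (ν : Measure Y) :
    WeaklyContained actA μ actB ν ↔ ∀ ε : ℝ, 0 < ε → ∀ (F : Finset G) (φ : X → ℕ),
      Measurable φ → ∃ ψ : Y → ℕ, Measurable ψ ∧
        l1Dist (μ.map (obsMap actA φ F)) (ν.map (obsMap actB ψ F)) ≤ ε :=
  Iff.rfl

lemma l1Dist_add_right {α : Type*} [MeasurableSpace α] (p q r : Measure α) [IsFiniteMeasure p]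
    [IsFiniteMeasure q] [IsFiniteMeasure r] : l1Dist (p + r) (q + r) = l1Dist p q := by
  refine tsum_congr fun u => ?_
  rw [measureReal_add_apply, measureReal_add_apply, add_sub_add_right_eq_sub]

section L1Dist

variable {α β : Type*} [MeasurableSpace α] [Countable α] [MeasurableSingletonClass α]
  [MeasurableSpace β] [Countable β] [MeasurableSingletonClass β]

lemma hasSum_measureReal_singleton_subtype (p : Measure α) [IsFiniteMeasure p] (s : Set α) :
    HasSum (fun u : s => p.real {(u : α)}) (p.real s) := by
  have h : ∑' u : s, p {(u : α)} = p s := by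
    simpa using tsum_measure_preimage_singleton (μ := p) s.to_countable (f := id)
      fun _ _ => measurableSet_singleton _
  have hfin : ∑' u : s, p {(u : α)} ≠ ⊤ := h ▸ measure_ne_top p s
  rw [measureReal_def, ← h, ENNReal.tsum_toReal_eq fun _ => measure_ne_top _ _]
  exact ENNReal.hasSum_toReal hfin

lemma hasSum_measureReal_singleton (p : Measure α) [IsFiniteMeasure p] :
    HasSum (fun u => p.real {u}) (p.real univ) :=
  (Equiv.Set.univ α).hasSum_iff.mp (hasSum_measureReal_singleton_subtype p univ)

lemma summable_abs_sub_measureReal_singleton (p q : Measure α) [IsFiniteMeasure p]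
    [IsFiniteMeasure q] : Summable fun u => |p.real {u} - q.real {u}| := by
  refine .of_nonneg_of_le (fun _ => abs_nonneg _) (fun u => ?_)
    ((hasSum_measureReal_singleton p).summable.add (hasSum_measureReal_singleton q).summable)
  simpa only [abs_of_nonneg measureReal_nonneg] using abs_sub (p.real {u}) (q.real {u})

lemma l1Dist_triangle (p q r : Measure α) [IsFiniteMeasure p] [IsFiniteMeasure q]
    [IsFiniteMeasure r] : l1Dist p r ≤ l1Dist p q + l1Dist q r := by
  have hpq := summable_abs_sub_measureReal_singleton p q
  have hqr := summable_abs_sub_measureReal_singleton q r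
  rw [l1Dist, l1Dist, l1Dist, ← hpq.tsum_add hqr]
  exact (summable_abs_sub_measureReal_singleton p r).tsum_le_tsum (fun _ => abs_sub_le _ _ _)
    (hpq.add hqr)

lemma l1Dist_le_add (p q : Measure α) [IsFiniteMeasure p] [IsFiniteMeasure q] :
    l1Dist p q ≤ p.real univ + q.real univ := by
  have hp := hasSum_measureReal_singleton p
  have hq := hasSum_measureReal_singleton q
  refine hasSum_le (fun u => ?_) (summable_abs_sub_measureReal_singleton p q).hasSum (hp.add hq)
  simpa only [abs_of_nonneg measureReal_nonneg] using abs_sub (p.real {u}) (q.real {u})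

lemma l1Dist_map_le (T : α → β) (p q : Measure α) [IsFiniteMeasure p] [IsFiniteMeasure q] :
    l1Dist (p.map T) (q.map T) ≤ l1Dist p q := by
  have hT : Measurable T := measurable_of_countable T
  have hd := summable_abs_sub_measureReal_singleton p q
  have hfiber (v : β) : |(p.map T).real {v} - (q.map T).real {v}| ≤
      ∑' u : T ⁻¹' {v}, |p.real {(u : α)} - q.real {(u : α)}| := by
    rw [map_measureReal_apply hT (measurableSet_singleton v),
      map_measureReal_apply hT (measurableSet_singleton v),
      ← ((hasSum_measureReal_singleton_subtype p _).sub
        (hasSum_measureReal_singleton_subtype q _)).tsum_eq]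
    exact norm_tsum_le_tsum_norm
      (f := fun u : T ⁻¹' {v} => p.real {(u : α)} - q.real {(u : α)}) (hd.subtype _)
  exact hasSum_le hfiber (summable_abs_sub_measureReal_singleton _ _).hasSum
    (hd.hasSum.tsum_fiberwise T)

lemma l1Dist_prod_right (p q : Measure α) (r : Measure β) [IsFiniteMeasure p]
    [IsFiniteMeasure q] [IsFiniteMeasure r] :
    l1Dist (p.prod r) (q.prod r) = l1Dist p q * r.real univ := by
  have hsingle (m : Measure α) [IsFiniteMeasure m] (w : α × β) :
      (m.prod r).real {w} = m.real {w.1} * r.real {w.2} := by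
    rw [← singleton_prod_singleton, measureReal_prod_prod]
  rw [l1Dist, l1Dist, ← (hasSum_measureReal_singleton r).tsum_eq,
    tsum_mul_tsum_of_summable_norm (by simpa using summable_abs_sub_measureReal_singleton p q)
      (by simpa only [Real.norm_eq_abs, abs_of_nonneg measureReal_nonneg]
        using (hasSum_measureReal_singleton r).summable)]
  refine tsum_congr fun w => ?_
  rw [hsingle, hsingle, ← sub_mul, abs_mul, abs_of_nonneg measureReal_nonneg]

lemma l1Dist_prod_prod_le (p₁ q₁ : Measure α) (p₂ q₂ : Measure β) [IsFiniteMeasure p₁]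
    [IsProbabilityMeasure q₁] [IsProbabilityMeasure p₂] [IsFiniteMeasure q₂] :
    l1Dist (p₁.prod p₂) (q₁.prod q₂) ≤ l1Dist p₁ q₁ + l1Dist p₂ q₂ := by
  calc l1Dist (p₁.prod p₂) (q₁.prod q₂)
      ≤ l1Dist (p₁.prod p₂) (q₁.prod p₂) + l1Dist (q₁.prod p₂) (q₁.prod q₂) :=
        l1Dist_triangle _ _ _
    _ ≤ l1Dist p₁ q₁ + l1Dist (p₂.prod q₁) (q₂.prod q₁) := by
        rw [l1Dist_prod_right, probReal_univ, mul_one, ← Measure.prod_swap (μ := p₂),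
          ← Measure.prod_swap (μ := q₂)]
        exact add_le_add_right (l1Dist_map_le Prod.swap (p₂.prod q₁) (q₂.prod q₁)) _
    _ = l1Dist p₁ q₁ + l1Dist p₂ q₂ := by
        rw [l1Dist_prod_right p₂ q₂ q₁, probReal_univ, mul_one]

lemma l1Dist_map_map_le {Z : Type*} [MeasurableSpace Z] (m : Measure Z) [IsFiniteMeasure m]
    {Φ Ψ : Z → α} (hΦ : Measurable Φ) (hΨ : Measurable Ψ) :
    l1Dist (m.map Φ) (m.map Ψ) ≤ 2 * m.real {z | Φ z ≠ Ψ z} := by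
  set E := {z | Φ z ≠ Ψ z}
  have hE : MeasurableSet E := (measurableSet_eq_fun hΦ hΨ).compl
  have hagree : (m.restrict Eᶜ).map Φ = (m.restrict Eᶜ).map Ψ :=
    Measure.map_congr (ae_restrict_of_forall_mem hE.compl fun _ hz => not_not.mp hz)
  have hmass (Θ : Z → α) (hΘ : Measurable Θ) : ((m.restrict E).map Θ).real univ = m.real E := by
    rw [map_measureReal_apply hΘ MeasurableSet.univ, preimage_univ, measureReal_restrict_apply_univ]
  have hsplit (Θ : Z → α) (hΘ : Measurable Θ) :
      m.map Θ = (m.restrict E).map Θ + (m.restrict Eᶜ).map Θ := by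
    rw [← Measure.map_add _ _ hΘ, Measure.restrict_add_restrict_compl hE]
  rw [hsplit Φ hΦ, hsplit Ψ hΨ, hagree, l1Dist_add_right]
  calc l1Dist ((m.restrict E).map Φ) ((m.restrict E).map Ψ)
      ≤ ((m.restrict E).map Φ).real univ + ((m.restrict E).map Ψ).real univ :=
        l1Dist_le_add _ _
    _ = 2 * m.real E := by rw [hmass Φ hΦ, hmass Ψ hΨ]; ring

end L1Dist

lemma exists_measureReal_tail_le {Z : Type*} [MeasurableSpace Z] (m : Measure Z)
    [IsFiniteMeasure m] {φ : Z → ℕ} (hφ : Measurable φ) {δ : ℝ} (hδ : 0 < δ) :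
    ∃ N, m.real {z | N ≤ φ z} ≤ δ := by
  have hlim : Filter.Tendsto (fun N => m {z | N ≤ φ z}) Filter.atTop (nhds 0) := by
    have hempty : (⋂ N, {z | N ≤ φ z}) = ∅ :=
      eq_empty_of_forall_notMem fun z hz =>
        (mem_iInter.mp hz (φ z + 1)).not_gt (Nat.lt_add_one _)
    have h := tendsto_measure_iInter_atTop (μ := m)
      (fun _ => (measurableSet_le measurable_const hφ).nullMeasurableSet)
      (fun _ _ hNM _ hz => hNM.trans hz) ⟨0, measure_ne_top m _⟩
    rwa [hempty, measure_empty] at h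
  obtain ⟨N, hN⟩ := (hlim.eventually (gt_mem_nhds (ENNReal.ofReal_pos.mpr hδ))).exists
  exact ⟨N, ENNReal.toReal_le_of_le_ofReal hδ.le hN.le⟩

lemma setOf_ne_sum_ite_subset {Z : Type*} (φ : Z → ℕ) (A : ℕ → Set Z)
    [∀ n, DecidablePred (· ∈ A n)] (N : ℕ) :
    {z | φ z ≠ ∑ n ∈ Finset.range N, if z ∈ A n then n else 0} ⊆
      {z | N ≤ φ z} ∪ ⋃ n ∈ Finset.range N, (φ ⁻¹' {n}) ∆ A n := by
  intro z hz
  by_contra hzgood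
  simp only [mem_union, mem_ofPred_eq, mem_iUnion, Finset.mem_range, not_or, not_exists,
    not_le] at hzgood
  obtain ⟨hlt, hsymm⟩ := hzgood
  have hmem (n : ℕ) (hn : n < N) : z ∈ A n ↔ φ z = n := by
    have := hsymm n hn
    simp only [mem_symmDiff, mem_preimage, mem_singleton_iff] at this
    tauto
  refine hz ?_
  rw [Finset.sum_congr rfl fun n hn => if_congr (hmem n (Finset.mem_range.mp hn)) rfl rfl,
    Finset.sum_ite_eq, if_pos (Finset.mem_range.mpr hlt)]

section RectObservable

variable {X Y : Type*} [MeasurableSpace X] [MeasurableSpace Y]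

/-- Observables reading one `ℕ`-valued observable of each coordinate; `Prop`-valued ones encode
the sets of the algebra generated by measurable rectangles. -/
def IsRectObservable {α : Type*} (χ : X × Y → α) : Prop :=
  ∃ (f₁ : X → ℕ) (f₂ : Y → ℕ) (g : ℕ → ℕ → α), Measurable f₁ ∧ Measurable f₂ ∧
    χ = fun z => g (f₁ z.1) (f₂ z.2)

namespace IsRectObservable

variable {α β γ : Type*}

lemma const (c : α) : IsRectObservable (X := X) (Y := Y) fun _ => c :=
  ⟨0, 0, fun _ _ => c, measurable_const, measurable_const, rfl⟩

lemma fst_mem {s : Set X} (hs : MeasurableSet s) :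
    IsRectObservable (Y := Y) fun z => z.1 ∈ s := by
  classical
  refine ⟨s.indicator 1, 0, fun u _ => u = 1, measurable_one.indicator hs, measurable_const, ?_⟩
  funext z
  by_cases h : z.1 ∈ s <;> simp [h]

lemma snd_mem {t : Set Y} (ht : MeasurableSet t) :
    IsRectObservable (X := X) fun z => z.2 ∈ t := by
  classical
  refine ⟨0, t.indicator 1, fun _ v => v = 1, measurable_const, measurable_one.indicator ht, ?_⟩
  funext z
  by_cases h : z.2 ∈ t <;> simp [h]

lemma comp₂ {χ₁ : X × Y → α} {χ₂ : X × Y → β} (h : α → β → γ) (h₁ : IsRectObservable χ₁)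
    (h₂ : IsRectObservable χ₂) : IsRectObservable fun z => h (χ₁ z) (χ₂ z) := by
  obtain ⟨f₁, f₂, g, hf₁, hf₂, rfl⟩ := h₁
  obtain ⟨k₁, k₂, g', hk₁, hk₂, rfl⟩ := h₂
  have hpair : Measurable fun p : ℕ × ℕ => Nat.pair p.1 p.2 := measurable_of_countable _
  refine ⟨fun x => Nat.pair (f₁ x) (k₁ x), fun y => Nat.pair (f₂ y) (k₂ y),
    fun u v => h (g u.unpair.1 v.unpair.1) (g' u.unpair.2 v.unpair.2),
    hpair.comp (hf₁.prodMk hk₁), hpair.comp (hf₂.prodMk hk₂), ?_⟩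
  simp only [Nat.unpair_pair]

protected lemma measurable [MeasurableSpace α] {χ : X × Y → α} (h : IsRectObservable χ) :
    Measurable χ := by
  obtain ⟨f₁, f₂, g, hf₁, hf₂, rfl⟩ := h
  exact (measurable_of_countable fun p : ℕ × ℕ => g p.1 p.2).comp
    ((hf₁.comp measurable_fst).prodMk (hf₂.comp measurable_snd))

end IsRectObservable

variable (X Y) in
def rectObservableSets : Set (Set (X × Y)) := {S | IsRectObservable (· ∈ S)}

lemma isSetAlgebra_rectObservableSets : IsSetAlgebra (rectObservableSets X Y) where
  empty_mem := IsRectObservable.const False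
  compl_mem _ hS := hS.comp₂ (fun P _ => ¬P) hS
  union_mem _ _ hS hT := hS.comp₂ (· ∨ ·) hT

lemma generateFrom_rectObservableSets :
    generateFrom (rectObservableSets X Y) = Prod.instMeasurableSpace := by
  refine le_antisymm (generateFrom_le fun S hS => measurableSet_setOfPred.mpr hS.measurable) ?_
  rw [← generateFrom_prod]
  refine generateFrom_mono ?_
  rintro _ ⟨s, hs, t, ht, rfl⟩
  exact (IsRectObservable.fst_mem hs).comp₂ (· ∧ ·) (IsRectObservable.snd_mem ht)

lemma measureDense_rectObservableSets (m : Measure (X × Y)) [IsFiniteMeasure m] :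
    m.MeasureDense (rectObservableSets X Y) :=
  .of_generateFrom_isSetAlgebra_finite m isSetAlgebra_rectObservableSets
    generateFrom_rectObservableSets.symm

lemma exists_isRectObservable_measureReal_ne_le (m : Measure (X × Y)) [IsFiniteMeasure m]
    {φ : X × Y → ℕ} (hφ : Measurable φ) {δ : ℝ} (hδ : 0 < δ) :
    ∃ χ : X × Y → ℕ, IsRectObservable χ ∧ m.real {z | φ z ≠ χ z} ≤ δ := by
  classical
  obtain ⟨N, hN⟩ := exists_measureReal_tail_le m hφ (half_pos hδ)
  set η := δ / (2 * (N + 1))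
  have hη : 0 < η := by positivity
  have happrox (n : ℕ) : ∃ A ∈ rectObservableSets X Y, m.real ((φ ⁻¹' {n}) ∆ A) ≤ η := by
    obtain ⟨A, hA, hlt⟩ := (measureDense_rectObservableSets m).approx _
      (hφ (measurableSet_singleton n)) (measure_ne_top m _) η hη
    exact ⟨A, hA, ENNReal.toReal_le_of_le_ofReal hη.le hlt.le⟩
  choose A hA hAφ using happrox
  set χ : X × Y → ℕ := fun z => ∑ n ∈ Finset.range N, if z ∈ A n then n else 0
  have hχ : IsRectObservable χ := by
    rw [show χ = ∑ n ∈ Finset.range N, fun z => if z ∈ A n then n else 0 from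
      funext fun z => (Finset.sum_apply z _ fun n z => if z ∈ A n then n else 0).symm]
    refine Finset.sum_induction _ IsRectObservable (fun _ _ h₁ h₂ => h₁.comp₂ (· + ·) h₂)
      (IsRectObservable.const 0) fun n _ => ?_
    exact (hA n).comp₂ (fun P _ => if P then n else 0) (hA n)
  refine ⟨χ, hχ, ?_⟩
  calc m.real {z | φ z ≠ χ z}
      ≤ m.real {z | N ≤ φ z} + ∑ n ∈ Finset.range N, m.real ((φ ⁻¹' {n}) ∆ A n) :=
        (measureReal_mono (μ := m) (setOf_ne_sum_ite_subset φ A N)).trans <|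
          (measureReal_union_le _ _).trans <|
            add_le_add_right (measureReal_biUnion_finset_le _ _) _
    _ ≤ δ / 2 + N * η :=
        add_le_add hN (by simpa using Finset.sum_le_sum (s := Finset.range N) fun n _ => hAφ n)
    _ ≤ δ := by
        have hNη : ((N : ℝ) + 1) * η = δ / 2 := by
          simp only [η]
          field_simp
        linarith

end RectObservable

section Observables

variable {G Z : Type*} [MeasurableSpace Z]

lemma measurable_obsMap {act : G → Z → Z} (hact : ∀ g, Measurable (act g)) {φ : Z → ℕ}
    (hφ : Measurable φ) (F : Finset G) : Measurable (obsMap act φ F) :=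
  measurable_pi_lambda _ fun f => hφ.comp (hact f)

lemma measureReal_obsMap_ne_le {m : Measure Z} [IsFiniteMeasure m] {act : G → Z → Z}
    (hact : ∀ g, MeasurePreserving (act g) m m) {φ χ : Z → ℕ} (hφ : Measurable φ)
    (hχ : Measurable χ) (F : Finset G) :
    m.real {z | obsMap act φ F z ≠ obsMap act χ F z} ≤ F.card * m.real {z | φ z ≠ χ z} := by
  set E := {z | φ z ≠ χ z}
  have hE : MeasurableSet E := (measurableSet_eq_fun hφ hχ).compl
  have hsub : {z | obsMap act φ F z ≠ obsMap act χ F z} ⊆ ⋃ f ∈ F, act f ⁻¹' E := by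
    intro z hz
    simp only [mem_iUnion, mem_preimage, exists_prop]
    by_contra! hagree
    exact hz (funext fun f => not_not.mp (hagree f f.2))
  calc m.real {z | obsMap act φ F z ≠ obsMap act χ F z}
      ≤ ∑ f ∈ F, m.real (act f ⁻¹' E) :=
        (measureReal_mono hsub (measure_ne_top _ _)).trans (measureReal_biUnion_finset_le _ _)
    _ = F.card * m.real E := by
        simp only [(hact _).measureReal_preimage hE.nullMeasurableSet, Finset.sum_const,
          nsmul_eq_mul]

lemma l1Dist_map_obsMap_le {m : Measure Z} [IsFiniteMeasure m] {act : G → Z → Z}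
    (hact : ∀ g, MeasurePreserving (act g) m m) {φ χ : Z → ℕ} (hφ : Measurable φ)
    (hχ : Measurable χ) (F : Finset G) :
    l1Dist (m.map (obsMap act φ F)) (m.map (obsMap act χ F)) ≤
      2 * F.card * m.real {z | φ z ≠ χ z} := by
  have hmeas := fun g => (hact g).measurable
  calc l1Dist (m.map (obsMap act φ F)) (m.map (obsMap act χ F))
      ≤ 2 * m.real {z | obsMap act φ F z ≠ obsMap act χ F z} :=
        l1Dist_map_map_le m (measurable_obsMap hmeas hφ F) (measurable_obsMap hmeas hχ F)
    _ ≤ 2 * F.card * m.real {z | φ z ≠ χ z} := by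
        rw [mul_assoc]
        exact mul_le_mul_of_nonneg_left (measureReal_obsMap_ne_le hact hφ hχ F) zero_le_two

end Observables

section ProductAction

variable {G X Y X' Y' : Type*} [MeasurableSpace X] [MeasurableSpace Y] [MeasurableSpace X']
  [MeasurableSpace Y']

lemma map_obsMap_prod (μ : Measure X) (ν : Measure Y) [SFinite μ] [SFinite ν]
    {a : G → X → X} {b : G → Y → Y} (ha : ∀ g, Measurable (a g)) (hb : ∀ g, Measurable (b g))
    {φ₁ : X → ℕ} {φ₂ : Y → ℕ} (hφ₁ : Measurable φ₁) (hφ₂ : Measurable φ₂) (h : ℕ → ℕ → ℕ)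
    (F : Finset G) :
    (μ.prod ν).map (obsMap (fun g p => (a g p.1, b g p.2)) (fun z => h (φ₁ z.1) (φ₂ z.2)) F) =
      ((μ.map (obsMap a φ₁ F)).prod (ν.map (obsMap b φ₂ F))).map
        fun w f => h (w.1 f) (w.2 f) := by
  rw [Measure.map_prod_map _ _ (measurable_obsMap ha hφ₁ F) (measurable_obsMap hb hφ₂ F),
    Measure.map_map (measurable_of_countable _)
      ((measurable_obsMap ha hφ₁ F).prodMap (measurable_obsMap hb hφ₂ F))]
  rfl

lemma l1Dist_map_obsMap_prod_le (μ : Measure X) (ν : Measure Y) (μ' : Measure X')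
    (ν' : Measure Y') [IsProbabilityMeasure μ] [IsProbabilityMeasure ν]
    [IsProbabilityMeasure μ'] [IsProbabilityMeasure ν']
    {a : G → X → X} {b : G → Y → Y} {a' : G → X' → X'} {b' : G → Y' → Y'}
    (ha : ∀ g, Measurable (a g)) (hb : ∀ g, Measurable (b g))
    (ha' : ∀ g, Measurable (a' g)) (hb' : ∀ g, Measurable (b' g))
    {φ₁ : X → ℕ} {φ₂ : Y → ℕ} {ψ₁ : X' → ℕ} {ψ₂ : Y' → ℕ} (hφ₁ : Measurable φ₁)
    (hφ₂ : Measurable φ₂) (hψ₁ : Measurable ψ₁) (hψ₂ : Measurable ψ₂) (h : ℕ → ℕ → ℕ)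
    (F : Finset G) :
    l1Dist ((μ.prod ν).map
        (obsMap (fun g p => (a g p.1, b g p.2)) (fun z => h (φ₁ z.1) (φ₂ z.2)) F))
      ((μ'.prod ν').map
        (obsMap (fun g p => (a' g p.1, b' g p.2)) (fun z => h (ψ₁ z.1) (ψ₂ z.2)) F)) ≤
      l1Dist (μ.map (obsMap a φ₁ F)) (μ'.map (obsMap a' ψ₁ F)) +
        l1Dist (ν.map (obsMap b φ₂ F)) (ν'.map (obsMap b' ψ₂ F)) := by
  have : IsProbabilityMeasure (μ'.map (obsMap a' ψ₁ F)) :=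
    Measure.isProbabilityMeasure_map (measurable_obsMap ha' hψ₁ F).aemeasurable
  have : IsProbabilityMeasure (ν.map (obsMap b φ₂ F)) :=
    Measure.isProbabilityMeasure_map (measurable_obsMap hb hφ₂ F).aemeasurable
  rw [map_obsMap_prod μ ν ha hb hφ₁ hφ₂, map_obsMap_prod μ' ν' ha' hb' hψ₁ hψ₂]
  exact (l1Dist_map_le _ _ _).trans (l1Dist_prod_prod_le _ _ _ _)

end ProductAction

theorem weaklyContained_prod_general {G : Type*} [Group G]
    {X X' Y Y' : Type*} [MeasurableSpace X] [MeasurableSpace X']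
    [MeasurableSpace Y] [MeasurableSpace Y']
    (μ : Measure X) [IsProbabilityMeasure μ] (μ' : Measure X') [IsProbabilityMeasure μ']
    (ν : Measure Y) [IsProbabilityMeasure ν] (ν' : Measure Y') [IsProbabilityMeasure ν']
    (a : G → X → X) (ha : IsPMPAction a μ) (a' : G → X' → X') (ha' : IsPMPAction a' μ')
    (b : G → Y → Y) (hb : IsPMPAction b ν) (b' : G → Y' → Y') (hb' : IsPMPAction b' ν')
    (haa' : WeaklyContained a μ a' μ') (hbb' : WeaklyContained b ν b' ν') :
    WeaklyContained (fun g p => (a g p.1, b g p.2)) (μ.prod ν)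
      (fun g p => (a' g p.1, b' g p.2)) (μ'.prod ν') := by
  rw [weaklyContained_iff_l1Dist] at haa' hbb' ⊢
  intro ε hε F φ hφ
  set δ := ε / (4 * (F.card + 1))
  have hδ : 0 < δ := by positivity
  obtain ⟨χ, hχ, hne⟩ := exists_isRectObservable_measureReal_ne_le (μ.prod ν) hφ hδ
  obtain ⟨φ₁, φ₂, h, hφ₁, hφ₂, rfl⟩ := id hχ
  obtain ⟨ψ₁, hψ₁, hd₁⟩ := haa' (ε / 4) (by positivity) F φ₁ hφ₁
  obtain ⟨ψ₂, hψ₂, hd₂⟩ := hbb' (ε / 4) (by positivity) F φ₂ hφ₂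
  have hψ : IsRectObservable fun z : X' × Y' => h (ψ₁ z.1) (ψ₂ z.2) :=
    ⟨ψ₁, ψ₂, h, hψ₁, hψ₂, rfl⟩
  refine ⟨_, hψ.measurable, ?_⟩
  have hdist₁ := (l1Dist_map_obsMap_le (fun g => (ha.2.2 g).prod (hb.2.2 g)) hφ hχ.measurable
    F).trans (mul_le_mul_of_nonneg_left hne (by positivity))
  have hdist₂ := (l1Dist_map_obsMap_prod_le μ ν μ' ν' (fun g => (ha.2.2 g).measurable)
    (fun g => (hb.2.2 g).measurable) (fun g => (ha'.2.2 g).measurable)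
    (fun g => (hb'.2.2 g).measurable) hφ₁ hφ₂ hψ₁ hψ₂ h F).trans (add_le_add hd₁ hd₂)
  refine ((l1Dist_triangle _ _ _).trans (add_le_add hdist₁ hdist₂)).trans ?_
  have hFδ : ((F.card : ℝ) + 1) * δ = ε / 4 := by
    simp only [δ]
    field_simp
  linarith

/-- Theorem (product of weakly contained actions): if `a ≺ a'` and `b ≺ b'` then
`a × b ≺ a' × b'`. -/
theorem weaklyContained_prod {G : Type*} [Group G] [Countable G]
    {X X' Y Y' : Type*} [MeasurableSpace X] [MeasurableSpace X']
    [MeasurableSpace Y] [MeasurableSpace Y']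
    [StandardBorelSpace X] [StandardBorelSpace X'] [StandardBorelSpace Y] [StandardBorelSpace Y']
    (μ : Measure X) [IsProbabilityMeasure μ] (μ' : Measure X') [IsProbabilityMeasure μ']
    (ν : Measure Y) [IsProbabilityMeasure ν] (ν' : Measure Y') [IsProbabilityMeasure ν']
    (a : G → X → X) (ha : IsPMPAction a μ) (a' : G → X' → X') (ha' : IsPMPAction a' μ')
    (b : G → Y → Y) (hb : IsPMPAction b ν) (b' : G → Y' → Y') (hb' : IsPMPAction b' ν')
    (haa' : WeaklyContained a μ a' μ') (hbb' : WeaklyContained b ν b' ν') :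
    WeaklyContained (fun g p => (a g p.1, b g p.2)) (μ.prod ν)
      (fun g p => (a' g p.1, b' g p.2)) (μ'.prod ν') :=
  weaklyContained_prod_general μ μ' ν ν' a ha a' ha' b hb b' hb' haa' hbb'
end
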